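/- Let (X,d) be a sequentially Yoneda-complete T1 bounded quasi-metric space. Then (CBX, D) is sequentially Yoneda-complete: every D-Cauchy sequence in CBX has a Yoneda limit with respect to D. -/

import Mathlib

open scoped NNReal

/-! Generic sequence notions for an arbitrary "distance" function `ρ`. -/

def IsCauchySeq {α : Type _} (ρ : α → α → ℝ) (u : ℕ → α) : Prop :=
  ∀ ε : ℝ, 0 < ε → ∃ N, ∀ n m, N ≤ n → n ≤ m → ρ (u n) (u m) < ε

def IsBiCauchySeq {α : Type _} (ρ : α → α → ℝ) (u : ℕ → α) : Prop :=
  ∀ ε : ℝ, 0 < ε → ∃ N, ∀ n m, N ≤ n → N ≤ m → ρ (u n) (u m) < ε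

/-- `sup_{m ≥ n} ρ (u m) y`. -/
noncomputable def supTail {α : Type _} (ρ : α → α → ℝ) (u : ℕ → α) (y : α) (n : ℕ) : ℝ :=
  sSup {t | ∃ m, n ≤ m ∧ t = ρ (u m) y}

/-- `x` is a Yoneda limit of `u`:  `ρ x y = inf_n sup_{m ≥ n} ρ (u m) y` for all `y`. -/
def IsYonedaLim {α : Type _} (ρ : α → α → ℝ) (u : ℕ → α) (x : α) : Prop :=
  ∀ y, ρ x y = sInf (Set.range (supTail ρ u y))

def SeqYonedaCompleteD {α : Type _} (ρ : α → α → ℝ) : Prop :=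
  ∀ u, IsCauchySeq ρ u → ∃ x, IsYonedaLim ρ u x

/-- Smyth completeness: every Cauchy sequence converges in the symmetrized metric. -/
def SmythCompleteD {α : Type _} (ρ : α → α → ℝ) : Prop :=
  ∀ u, IsCauchySeq ρ u → ∃ x, ∀ ε : ℝ, 0 < ε → ∃ N, ∀ n, N ≤ n →
    max (ρ x (u n)) (ρ (u n) x) < ε

/-- `inf_{m ≥ n} ρ e (u m)`. -/
noncomputable def infTail {α : Type _} (ρ : α → α → ℝ) (u : ℕ → α) (e : α) (n : ℕ) : ℝ :=
  sInf {t | ∃ m, n ≤ m ∧ t = ρ e (u m)}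

/-- `e` is a finite point: for every Cauchy sequence `u` with Yoneda limit `x`,
`ρ e x = sup_n inf_{m ≥ n} ρ e (u m)`. -/
def IsFinitePoint {α : Type _} (ρ : α → α → ℝ) (e : α) : Prop :=
  ∀ u x, IsCauchySeq ρ u → IsYonedaLim ρ u x →
    ρ e x = sSup (Set.range (infTail ρ u e))

/-- ω-algebraic: a countable set of finite points such that every point is a Yoneda limit
of a Cauchy sequence of points from it. -/
def OmegaAlgebraicD {α : Type _} (ρ : α → α → ℝ) : Prop :=
  ∃ X0 : Set α, X0.Countable ∧ (∀ e ∈ X0, IsFinitePoint ρ e) ∧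
    ∀ x, ∃ u : ℕ → α, (∀ n, u n ∈ X0) ∧ IsCauchySeq ρ u ∧ IsYonedaLim ρ u x

/-- A quasi-metric on `X`. -/
structure QuasiMetric (X : Type _) : Type _ where
  d : X → X → ℝ
  nonneg : ∀ x y, 0 ≤ d x y
  triangle : ∀ x y z, d x z ≤ d x y + d y z
  eq_iff : ∀ x y, x = y ↔ d x y = 0 ∧ d y x = 0

/-- Formal balls over `X`. -/
abbrev FB (X : Type _) := X × ℝ≥0

/-- Nonempty finite subsets of the space of formal balls. -/
def PFin (X : Type _) : Type _ := {F : Set (FB X) // F.Finite ∧ F.Nonempty}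

namespace QuasiMetric

variable {X : Type _} (Q : QuasiMetric X)

def IsT1 : Prop := ∀ x y, Q.d x y = 0 → x = y

def Bounded : Prop := ∃ C : ℝ, ∀ x y, Q.d x y ≤ C

def ball (x : X) (ε : ℝ) : Set X := {y | Q.d x y < ε}

/-- The topology `τ_d` induced by the quasi-metric. -/
def tau : TopologicalSpace X :=
  TopologicalSpace.generateFrom {s | ∃ x ε, 0 < ε ∧ s = Q.ball x ε}

def dstar (x y : X) : ℝ := max (Q.d x y) (Q.d y x)

def SeqYonedaComplete : Prop := SeqYonedaCompleteD Q.d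

def SmythComplete : Prop := SmythCompleteD Q.d

/-- `K` is `d⁻¹`-precompact. -/
def dInvPrecompact (K : Set X) : Prop :=
  ∀ ε : ℝ, 0 < ε → ∃ F : Set X, F.Finite ∧ F ⊆ K ∧ ∀ k ∈ K, ∃ x ∈ F, Q.d k x < ε

/-- The nonempty compact subsets of `(X, τ_d)`. -/
def K0 : Set (Set X) := {K | K.Nonempty ∧ @IsCompact X Q.tau K}

noncomputable def dPtSet (x : X) (B : Set X) : ℝ := sInf {t | ∃ b ∈ B, t = Q.d x b}

noncomputable def dSetPt (A : Set X) (y : X) : ℝ := sInf {t | ∃ a ∈ A, t = Q.d a y}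

/-- The Hausdorff quasi-metric. -/
noncomputable def Hd (A B : Set X) : ℝ :=
  max (sSup {t | ∃ b ∈ B, t = Q.dSetPt A b}) (sSup {t | ∃ a ∈ A, t = Q.dPtSet a B})

/-- Order on formal balls: `(x,r) ⊑ (y,s)  ↔  d x y ≤ r - s`. -/
def ble (a b : FB X) : Prop := Q.d a.1 b.1 ≤ (a.2 : ℝ) - (b.2 : ℝ)

/-- Auxiliary relation: `(x,r) ≺ (y,s)  ↔  d x y < r - s`. -/
def blt (a b : FB X) : Prop := Q.d a.1 b.1 < (a.2 : ℝ) - (b.2 : ℝ)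

def iota (x : X) : FB X := (x, 0)

/-- The quasi-metric `q` on formal balls. -/
noncomputable def q (a b : FB X) : ℝ :=
  max (Q.d a.1 b.1) |(a.2 : ℝ) - (b.2 : ℝ)| + ((b.2 : ℝ) - (a.2 : ℝ))

/-- The Egli–Milner relation `≺_EM` on nonempty finite sets of formal balls. -/
def em (F G : PFin X) : Prop :=
  (∀ b ∈ G.1, ∃ a ∈ F.1, Q.blt a b) ∧ (∀ a ∈ F.1, ∃ b ∈ G.1, Q.blt a b)

/-- The non-strict Egli–Milner relation `⊑_EM`. -/
def emLE (F G : PFin X) : Prop :=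
  (∀ a ∈ F.1, ∃ b ∈ G.1, Q.ble a b) ∧ (∀ b ∈ G.1, ∃ a ∈ F.1, Q.ble a b)

/-- `rF = max { r : (x,r) ∈ F }`. -/
noncomputable def rF (F : PFin X) : ℝ := sSup {t | ∃ p ∈ F.1, t = (p.2 : ℝ)}

/-- `δ(F,G) = min {(r-s) - d x y : (x,r) ∈ F, (y,s) ∈ G, (x,r) ≺ (y,s)}`. -/
noncomputable def delta (F G : PFin X) : ℝ :=
  sInf {t | ∃ a ∈ F.1, ∃ b ∈ G.1, Q.blt a b ∧ t = ((a.2 : ℝ) - (b.2 : ℝ)) - Q.d a.1 b.1}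

/-- The Hausdorff quasi-metric `H_q` on `P_fin(BX)` induced by `q`. -/
noncomputable def Hq (F G : PFin X) : ℝ :=
  max (sSup {t | ∃ a ∈ F.1, t = sInf {s | ∃ b ∈ G.1, s = Q.q a b}})
      (sSup {t | ∃ b ∈ G.1, t = sInf {s | ∃ a ∈ F.1, s = Q.q a b}})

/-- ω-chains in `(P_fin(BX), ≺_EM)`; `c n` plays the role of `F_{n+1}`. -/
def Chain : Type _ := {c : ℕ → PFin X // ∀ n, Q.em (c n) (c (n + 1))}

def chainLE (c c' : Q.Chain) : Prop := ∀ n, ∃ m, Q.em (c.1 n) (c'.1 m)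

def chainEquiv (c c' : Q.Chain) : Prop := Q.chainLE c c' ∧ Q.chainLE c' c

lemma blt_trans {a b c : FB X} (h1 : Q.blt a b) (h2 : Q.blt b c) : Q.blt a c := by
  have h3 := Q.triangle a.1 b.1 c.1
  unfold blt at h1 h2 ⊢
  linarith

lemma em_trans {F G H : PFin X} (h1 : Q.em F G) (h2 : Q.em G H) : Q.em F H := by
  constructor
  · intro b hb
    obtain ⟨a, ha, hab⟩ := h2.1 b hb
    obtain ⟨a', ha', h'⟩ := h1.1 a ha
    exact ⟨a', ha', Q.blt_trans h' hab⟩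
  · intro a ha
    obtain ⟨b, hb, hab⟩ := h1.2 a ha
    obtain ⟨c, hc, hbc⟩ := h2.2 b hb
    exact ⟨c, hc, Q.blt_trans hab hbc⟩

lemma chainLE_refl (c : Q.Chain) : Q.chainLE c c := fun n => ⟨n + 1, c.2 n⟩

lemma chainLE_trans {a b c : Q.Chain} (h1 : Q.chainLE a b) (h2 : Q.chainLE b c) :
    Q.chainLE a c := by
  intro n
  obtain ⟨m, hm⟩ := h1 n
  obtain ⟨k, hk⟩ := h2 m
  exact ⟨k, Q.em_trans hm hk⟩

def chainSetoid : Setoid Q.Chain where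
  r := Q.chainEquiv
  iseqv := ⟨fun c => ⟨Q.chainLE_refl c, Q.chainLE_refl c⟩,
    fun h => ⟨h.2, h.1⟩,
    fun h1 h2 => ⟨Q.chainLE_trans h1.1 h2.1, Q.chainLE_trans h2.2 h1.2⟩⟩

/-- The ω-Plotkin domain `CBX`: equivalence classes of ω-chains in `(P_fin(BX), ≺_EM)`. -/
def CBX : Type _ := Quotient Q.chainSetoid

/-- The partial order of `CBX`. -/
def cbLE : Q.CBX → Q.CBX → Prop :=
  Quotient.lift₂ Q.chainLE (by
    intro a b a' b' ha hb
    have ha' : Q.chainEquiv a a' := ha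
    have hb' : Q.chainEquiv b b' := hb
    exact propext ⟨fun h => Q.chainLE_trans (Q.chainLE_trans ha'.2 h) hb'.1,
      fun h => Q.chainLE_trans (Q.chainLE_trans ha'.1 h) hb'.2⟩)

def chainWB (c c' : Q.Chain) : Prop := ∃ m, ∀ n, Q.em (c.1 n) (c'.1 m)

/-- The way-below relation of `CBX`. -/
def cbWB : Q.CBX → Q.CBX → Prop :=
  Quotient.lift₂ Q.chainWB (by
    intro a b a' b' ha hb
    have ha' : Q.chainEquiv a a' := ha
    have hb' : Q.chainEquiv b b' := hb
    apply propext
    constructor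
    · rintro ⟨m, hm⟩
      obtain ⟨k, hk⟩ := hb'.1 m
      refine ⟨k, fun n => ?_⟩
      obtain ⟨p, hp⟩ := ha'.2 n
      exact Q.em_trans hp (Q.em_trans (hm p) hk)
    · rintro ⟨m, hm⟩
      obtain ⟨k, hk⟩ := hb'.2 m
      refine ⟨k, fun n => ?_⟩
      obtain ⟨p, hp⟩ := ha'.1 n
      exact Q.em_trans hp (Q.em_trans (hm p) hk))

/-- The Scott topology of `CBX`, generated by the sets `↟I`. -/
def scottTop : TopologicalSpace Q.CBX :=
  TopologicalSpace.generateFrom {s | ∃ I : Q.CBX, s = {J | Q.cbWB I J}}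

def upSet (F : PFin X) : Set (FB X) := {b | ∃ a ∈ F.1, Q.ble a b}

/-- `I⁺ = ⋂_n ↑F_n` for a representing chain. -/
def Iplus (c : Q.Chain) : Set (FB X) := ⋂ n, Q.upSet (c.1 n)

noncomputable def IplusQ (I : Q.CBX) : Set (FB X) := Q.Iplus (Quotient.out I)

/-- `r̄ I = inf { rF : F occurs in some chain representing I }`. -/
noncomputable def rbar (I : Q.CBX) : ℝ :=
  sInf {t | ∃ c : Q.Chain, Quotient.mk Q.chainSetoid c = I ∧ ∃ n, t = rF (c.1 n)}

/-- `c` is a standard representation of `K`: `c n` (playing the role of `F_{n+1}`) is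
`{(x_i^j, 1/(n+1)) : 1 ≤ j ≤ n+1, 1 ≤ i ≤ m_j}` where the `x_i^j ∈ K` satisfy
`∀ y ∈ K, ∃ i, d (x_i^j) y < 1/(2 j²)`. -/
def IsStdRep (K : Set X) (c : Q.Chain) : Prop :=
  ∃ (m : ℕ → ℕ) (x : ℕ → ℕ → X),
    (∀ j i, 1 ≤ j → 1 ≤ i → i ≤ m j → x j i ∈ K) ∧
    (∀ j, 1 ≤ j → ∀ y ∈ K, ∃ i, 1 ≤ i ∧ i ≤ m j ∧ Q.d (x j i) y < 1 / (2 * (j : ℝ) ^ 2)) ∧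
    (∀ n : ℕ, (c.1 n).1 =
      {p : FB X | ∃ j i, 1 ≤ j ∧ j ≤ n + 1 ∧ 1 ≤ i ∧ i ≤ m j ∧
        p = (x j i, ((n : ℝ≥0) + 1)⁻¹)})

/-- `D` on representing chains: `sup_n inf_m H_q(F_n, G_m)`. -/
noncomputable def Dchain (c c' : Q.Chain) : ℝ :=
  sSup {t | ∃ n, t = sInf {s | ∃ m, s = Q.Hq (c.1 n) (c'.1 m)}}

/-- The quasi-metric `D` on `CBX`. -/
noncomputable def D (I J : Q.CBX) : ℝ := Q.Dchain (Quotient.out I) (Quotient.out J)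

/-- The topology induced by `D` on `CBX`. -/
def DTop : TopologicalSpace Q.CBX :=
  TopologicalSpace.generateFrom
    {s | ∃ (I : Q.CBX) (ε : ℝ), 0 < ε ∧ s = {J | Q.D I J < ε}}

/-- The hyperspace `K_0(X)` as a type. -/
def K0T : Type _ := {K : Set X // K.Nonempty ∧ @IsCompact X Q.tau K}

/-- The Vietoris topology on `K_0(X)`. -/
def vietoris : TopologicalSpace Q.K0T :=
  TopologicalSpace.generateFrom
    ({s | ∃ V : Set X, @IsOpen X Q.tau V ∧ s = {K : Q.K0T | (K.1 ∩ V).Nonempty}} ∪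
     {s | ∃ V : Set X, @IsOpen X Q.tau V ∧ s = {K : Q.K0T | K.1 ⊆ V}})

/-- The topology of the Hausdorff quasi-metric on `K_0(X)`. -/
def hdTop : TopologicalSpace Q.K0T :=
  TopologicalSpace.generateFrom
    {s | ∃ (K : Q.K0T) (ε : ℝ), 0 < ε ∧ s = {L : Q.K0T | Q.Hd K.1 L.1 < ε}}

/-- Round ideals of `(P_fin(BX), ≺_EM)`. -/
def IsRoundIdeal (I : Set (PFin X)) : Prop :=
  I.Nonempty ∧ (∀ F G : PFin X, Q.em F G → G ∈ I → F ∈ I) ∧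
  (∀ F ∈ I, ∀ G ∈ I, ∃ H ∈ I, Q.em F H ∧ Q.em G H)

end QuasiMetric

/-!
The classes `u m` of a `D`-Cauchy sequence are represented by ω-chains. Pass to a subsequence
`e j` with `D(e j, e m) < 2⁻⁽ʲ⁺¹⁾` for `j ≤ m`, and pick from the chain `e j` a member `F_j` so far
along that `H_q(F_j, F_{j+1}) < 2⁻⁽ʲ⁺¹⁾` and that `H_q(G, F_j)` is within `2⁻ʲ` of
`inf_m H_q(G, (e j)_m)` for the first `j` members `G` of the first `j` chains. Raising the radii of
`F_j` by `2⁻ʲ` yields an ω-chain whose class `I` satisfies `D(u m, I) → 0` and lies below every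
eventual upper bound of `D(u m, y)`; in any space with a triangle inequality these two properties
make `I` a Yoneda limit.
-/

open Filter

section Generic

variable {α : Type*}

lemma setOf_exists_mem_eq_image {β : Type*} (S : Set β) (f : β → α) :
    {t | ∃ b ∈ S, t = f b} = f '' S := by
  ext t; simp [eq_comm]

lemma Set.Finite.csInf_image_le_iff [ConditionallyCompleteLinearOrder α] {β : Type*} {S : Set β}
    (hS : S.Finite) (hne : S.Nonempty) {f : β → α} {a : α} :
    sInf (f '' S) ≤ a ↔ ∃ b ∈ S, f b ≤ a := by
  refine ⟨fun h => ?_, fun ⟨b, hb, hba⟩ =>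
    (csInf_le (hS.image f).bddBelow ⟨b, hb, rfl⟩).trans hba⟩
  obtain ⟨b, hb, hfb⟩ := (hne.image f).csInf_mem (hS.image f)
  exact ⟨b, hb, hfb ▸ h⟩

lemma Set.Finite.csInf_image_lt_iff [ConditionallyCompleteLinearOrder α] {β : Type*} {S : Set β}
    (hS : S.Finite) (hne : S.Nonempty) {f : β → α} {a : α} :
    sInf (f '' S) < a ↔ ∃ b ∈ S, f b < a := by
  refine ⟨fun h => ?_, fun ⟨b, hb, hba⟩ =>
    (csInf_le (hS.image f).bddBelow ⟨b, hb, rfl⟩).trans_lt hba⟩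
  obtain ⟨b, hb, hfb⟩ := (hne.image f).csInf_mem (hS.image f)
  exact ⟨b, hb, hfb ▸ h⟩

theorem isYonedaLim_of_eventually {ρ : α → α → ℝ} {u : ℕ → α} {x : α}
    (htri : ∀ m y, ρ (u m) y ≤ ρ (u m) x + ρ x y)
    (hbdd : ∀ y, BddAbove (Set.range fun m => ρ (u m) y))
    (hconv : ∀ ε > 0, ∀ᶠ m in atTop, ρ (u m) x ≤ ε)
    (hle : ∀ y B, (∀ᶠ m in atTop, ρ (u m) y ≤ B) → ρ x y ≤ B) :
    IsYonedaLim ρ u x := by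
  intro y
  have htail_bdd : ∀ n, BddAbove {t | ∃ m, n ≤ m ∧ t = ρ (u m) y} := fun n =>
    (hbdd y).mono (by rintro t ⟨m, -, rfl⟩; exact ⟨m, rfl⟩)
  have hle_tail : ∀ n, ρ x y ≤ supTail ρ u y n := fun n =>
    hle y _ (eventually_atTop.2 ⟨n, fun m hm => le_csSup (htail_bdd n) ⟨m, hm, rfl⟩⟩)
  refine le_antisymm (le_csInf (Set.range_nonempty _) (by rintro _ ⟨n, rfl⟩; exact hle_tail n)) ?_
  refine le_of_forall_pos_le_add fun η hη => ?_
  obtain ⟨M, hM⟩ := eventually_atTop.1 (hconv η hη)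
  calc sInf (Set.range (supTail ρ u y))
      ≤ supTail ρ u y M := csInf_le ⟨ρ x y, by rintro _ ⟨n, rfl⟩; exact hle_tail n⟩ ⟨M, rfl⟩
    _ ≤ ρ x y + η := csSup_le ⟨_, M, le_rfl, rfl⟩ <| by
        rintro _ ⟨m, hm, rfl⟩; linarith [htri m y, hM m hm]

theorem IsCauchySeq.isYonedaLim_of_subseq {ρ : α → α → ℝ} {u : ℕ → α} {x : α} {k : ℕ → ℕ}
    (hu : IsCauchySeq ρ u) (htri : ∀ a b c, ρ a c ≤ ρ a b + ρ b c)
    (hbdd : ∀ y, BddAbove (Set.range fun m => ρ (u m) y)) (hk : Tendsto k atTop atTop)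
    (hconv : ∀ ε > 0, ∀ᶠ j in atTop, ρ (u (k j)) x ≤ ε)
    (hle : ∀ y B, (∀ᶠ j in atTop, ρ (u (k j)) y ≤ B) → ρ x y ≤ B) :
    IsYonedaLim ρ u x := by
  refine isYonedaLim_of_eventually (fun m y => htri _ _ _) hbdd (fun ε hε => ?_)
    (fun y B h => hle y B (hk.eventually h))
  obtain ⟨N, hN⟩ := hu (ε / 2) (half_pos hε)
  filter_upwards [eventually_ge_atTop N] with m hm
  obtain ⟨j, hmj, hj⟩ := ((hk.eventually (eventually_ge_atTop m)).and
    (hconv (ε / 2) (half_pos hε))).exists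
  linarith [htri (u m) (u (k j)) x, hN m (k j) hm hmj]

theorem IsCauchySeq.exists_strictMono {ρ : α → α → ℝ} {u : ℕ → α} (hu : IsCauchySeq ρ u)
    {ε : ℕ → ℝ} (hε : ∀ j, 0 < ε j) :
    ∃ k : ℕ → ℕ, StrictMono k ∧ ∀ j m, k j ≤ m → ρ (u (k j)) (u m) < ε j :=
  extraction_forall_of_eventually fun j => by
    obtain ⟨N, hN⟩ := hu (ε j) (hε j)
    exact eventually_atTop.2 ⟨N, fun n hn m hm => hN n m hn hm⟩

end Generic

def PFin.shift {X : Type*} (F : PFin X) (δ : ℝ≥0) : PFin X :=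
  ⟨(fun p : FB X => (p.1, p.2 + δ)) '' F.1, F.2.1.image _, F.2.2.image _⟩

namespace QuasiMetric

variable {X : Type*} (Q : QuasiMetric X)

lemma q_nonneg (a b : FB X) : 0 ≤ Q.q a b := by
  unfold q
  linarith [le_abs_self ((a.2 : ℝ) - b.2), le_max_right (Q.d a.1 b.1) |(a.2 : ℝ) - b.2|]

lemma q_triangle (a b c : FB X) : Q.q a c ≤ Q.q a b + Q.q b c := by
  unfold q
  have := Q.triangle a.1 b.1 c.1
  simp only [abs_eq_max_neg, max_def]
  split_ifs <;> linarith

lemma q_eq_zero_of_blt {a b : FB X} (h : Q.blt a b) : Q.q a b = 0 := by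
  unfold blt at h
  unfold q
  rw [abs_of_nonneg (by linarith [Q.nonneg a.1 b.1]), max_eq_right h.le]
  ring

lemma q_le_of_d_le {C : ℝ} (hC : ∀ x y, Q.d x y ≤ C) (a b : FB X) :
    Q.q a b ≤ C + 2 * (b.2 : ℝ) := by
  unfold q
  have := hC a.1 b.1
  have := Q.nonneg a.1 b.1
  have := a.2.coe_nonneg
  simp only [abs_eq_max_neg, max_def]
  split_ifs <;> linarith

lemma q_shift_right (a b : FB X) (δ : ℝ≥0) :
    Q.q a (b.1, b.2 + δ) ≤ Q.q a b + 2 * (δ : ℝ) := by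
  unfold q
  have := δ.coe_nonneg
  simp only [NNReal.coe_add, abs_eq_max_neg, max_def]
  split_ifs <;> linarith

lemma q_shift_left (a b : FB X) (δ : ℝ≥0) : Q.q (a.1, a.2 + δ) b ≤ Q.q a b := by
  unfold q
  have := δ.coe_nonneg
  simp only [NNReal.coe_add, abs_eq_max_neg, max_def]
  split_ifs <;> linarith

lemma blt_shift_of_q_lt {a b : FB X} {δ δ' : ℝ≥0} (h : Q.q a b < δ - δ') :
    Q.blt (a.1, a.2 + δ) (b.1, b.2 + δ') := by
  unfold q at h
  unfold blt
  push_cast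
  linarith [le_max_left (Q.d a.1 b.1) |(a.2 : ℝ) - b.2|, le_abs_self ((a.2 : ℝ) - b.2),
    le_max_right (Q.d a.1 b.1) |(a.2 : ℝ) - b.2|]

section Hausdorff

lemma Hq_le_iff {F G : PFin X} {ε : ℝ} : Q.Hq F G ≤ ε ↔
    (∀ a ∈ F.1, ∃ b ∈ G.1, Q.q a b ≤ ε) ∧ (∀ b ∈ G.1, ∃ a ∈ F.1, Q.q a b ≤ ε) := by
  simp only [Hq, setOf_exists_mem_eq_image, max_le_iff,
    csSup_le_iff ((F.2.1.image _).bddAbove) (F.2.2.image _),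
    csSup_le_iff ((G.2.1.image _).bddAbove) (G.2.2.image _), Set.forall_mem_image,
    F.2.1.csInf_image_le_iff F.2.2, G.2.1.csInf_image_le_iff G.2.2]

lemma Hq_lt_iff {F G : PFin X} {ε : ℝ} : Q.Hq F G < ε ↔
    (∀ a ∈ F.1, ∃ b ∈ G.1, Q.q a b < ε) ∧ (∀ b ∈ G.1, ∃ a ∈ F.1, Q.q a b < ε) := by
  simp only [Hq, setOf_exists_mem_eq_image, max_lt_iff,
    (F.2.1.image _).csSup_lt_iff (F.2.2.image _),
    (G.2.1.image _).csSup_lt_iff (G.2.2.image _), Set.forall_mem_image,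
    F.2.1.csInf_image_lt_iff F.2.2, G.2.1.csInf_image_lt_iff G.2.2]

lemma Hq_nonneg (F G : PFin X) : 0 ≤ Q.Hq F G := by
  obtain ⟨a, ha⟩ := F.2.2
  obtain ⟨b, -, hab⟩ := (Q.Hq_le_iff.1 le_rfl).1 a ha
  exact (Q.q_nonneg a b).trans hab

lemma Hq_triangle (F G H : PFin X) : Q.Hq F H ≤ Q.Hq F G + Q.Hq G H := by
  obtain ⟨hFG, hGF⟩ := Q.Hq_le_iff.1 (le_refl (Q.Hq F G))
  obtain ⟨hGH, hHG⟩ := Q.Hq_le_iff.1 (le_refl (Q.Hq G H))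
  refine Q.Hq_le_iff.2 ⟨fun a ha => ?_, fun c hc => ?_⟩
  · obtain ⟨b, hb, hab⟩ := hFG a ha
    obtain ⟨c, hc, hbc⟩ := hGH b hb
    exact ⟨c, hc, (Q.q_triangle a b c).trans (add_le_add hab hbc)⟩
  · obtain ⟨b, hb, hbc⟩ := hHG c hc
    obtain ⟨a, ha, hab⟩ := hGF b hb
    exact ⟨a, ha, (Q.q_triangle a b c).trans (add_le_add hab hbc)⟩

lemma Hq_eq_zero_of_em {F G : PFin X} (h : Q.em F G) : Q.Hq F G = 0 :=
  le_antisymm (Q.Hq_le_iff.2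
    ⟨fun a ha => (h.2 a ha).imp fun _ ⟨hb, hab⟩ => ⟨hb, (Q.q_eq_zero_of_blt hab).le⟩,
     fun b hb => (h.1 b hb).imp fun _ ⟨ha, hab⟩ => ⟨ha, (Q.q_eq_zero_of_blt hab).le⟩⟩)
    (Q.Hq_nonneg F G)

lemma Hq_le_of_em_left {F F' : PFin X} (h : Q.em F F') (G : PFin X) :
    Q.Hq F G ≤ Q.Hq F' G := by
  simpa [Q.Hq_eq_zero_of_em h] using Q.Hq_triangle F F' G

lemma Hq_le_of_em_right {G G' : PFin X} (h : Q.em G G') (F : PFin X) :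
    Q.Hq F G' ≤ Q.Hq F G := by
  simpa [Q.Hq_eq_zero_of_em h] using Q.Hq_triangle F G G'

lemma le_rF {F : PFin X} {b : FB X} (hb : b ∈ F.1) : (b.2 : ℝ) ≤ rF F := by
  rw [rF, setOf_exists_mem_eq_image]
  exact le_csSup (F.2.1.image _).bddAbove ⟨b, hb, rfl⟩

lemma Hq_le_of_d_le {C : ℝ} (hC : ∀ x y, Q.d x y ≤ C) (F G : PFin X) :
    Q.Hq F G ≤ C + 2 * rF G := by
  obtain ⟨a₀, ha₀⟩ := F.2.2
  obtain ⟨b₀, hb₀⟩ := G.2.2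
  refine Q.Hq_le_iff.2 ⟨fun a _ => ⟨b₀, hb₀, ?_⟩, fun b hb => ⟨a₀, ha₀, ?_⟩⟩
  · linarith [Q.q_le_of_d_le hC a b₀, le_rF hb₀]
  · linarith [Q.q_le_of_d_le hC a₀ b, le_rF hb]

lemma Hq_shift_left_le (F G : PFin X) (δ : ℝ≥0) : Q.Hq (F.shift δ) G ≤ Q.Hq F G := by
  obtain ⟨hFG, hGF⟩ := Q.Hq_le_iff.1 (le_refl (Q.Hq F G))
  refine Q.Hq_le_iff.2 ⟨?_, fun b hb => ?_⟩
  · rintro _ ⟨a, ha, rfl⟩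
    obtain ⟨b, hb, hab⟩ := hFG a ha
    exact ⟨b, hb, (Q.q_shift_left a b δ).trans hab⟩
  · obtain ⟨a, ha, hab⟩ := hGF b hb
    exact ⟨_, ⟨a, ha, rfl⟩, (Q.q_shift_left a b δ).trans hab⟩

lemma Hq_shift_right_le (F G : PFin X) (δ : ℝ≥0) :
    Q.Hq F (G.shift δ) ≤ Q.Hq F G + 2 * δ := by
  obtain ⟨hFG, hGF⟩ := Q.Hq_le_iff.1 (le_refl (Q.Hq F G))
  refine Q.Hq_le_iff.2 ⟨fun a ha => ?_, ?_⟩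
  · obtain ⟨b, hb, hab⟩ := hFG a ha
    exact ⟨_, ⟨b, hb, rfl⟩, (Q.q_shift_right a b δ).trans (by linarith)⟩
  · rintro _ ⟨b, hb, rfl⟩
    obtain ⟨a, ha, hab⟩ := hGF b hb
    exact ⟨a, ha, (Q.q_shift_right a b δ).trans (by linarith)⟩

lemma em_shift_of_Hq_lt {F G : PFin X} {δ δ' : ℝ≥0} (h : Q.Hq F G < δ - δ') :
    Q.em (F.shift δ) (G.shift δ') := by
  obtain ⟨hFG, hGF⟩ := Q.Hq_lt_iff.1 h
  constructor
  · rintro _ ⟨b, hb, rfl⟩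
    obtain ⟨a, ha, hab⟩ := hGF b hb
    exact ⟨_, ⟨a, ha, rfl⟩, Q.blt_shift_of_q_lt hab⟩
  · rintro _ ⟨a, ha, rfl⟩
    obtain ⟨b, hb, hab⟩ := hFG a ha
    exact ⟨_, ⟨b, hb, rfl⟩, Q.blt_shift_of_q_lt hab⟩

end Hausdorff

section Chains

variable {Q}

lemma Chain.em_of_lt (c : Q.Chain) {n n' : ℕ} (h : n < n') : Q.em (c.1 n) (c.1 n') := by
  induction n', h using Nat.le_induction with
  | base => exact c.2 n
  | succ n' _ ih => exact Q.em_trans ih (c.2 n')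

lemma Chain.Hq_le_of_le_left (c : Q.Chain) {n n' : ℕ} (h : n ≤ n') (G : PFin X) :
    Q.Hq (c.1 n) G ≤ Q.Hq (c.1 n') G := by
  rcases h.eq_or_lt with rfl | h
  · exact le_rfl
  · exact Q.Hq_le_of_em_left (c.em_of_lt h) G

lemma Chain.Hq_le_of_le_right (c : Q.Chain) {n n' : ℕ} (h : n ≤ n') (F : PFin X) :
    Q.Hq F (c.1 n') ≤ Q.Hq F (c.1 n) := by
  rcases h.eq_or_lt with rfl | h
  · exact le_rfl
  · exact Q.Hq_le_of_em_right (c.em_of_lt h) F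

variable (Q)

noncomputable def infHq (F : PFin X) (c : Q.Chain) : ℝ := ⨅ m, Q.Hq F (c.1 m)

lemma infHq_le (F : PFin X) (c : Q.Chain) (m : ℕ) : Q.infHq F c ≤ Q.Hq F (c.1 m) :=
  ciInf_le ⟨0, by rintro _ ⟨m, rfl⟩; exact Q.Hq_nonneg _ _⟩ m

lemma le_infHq {F : PFin X} {c : Q.Chain} {ε : ℝ} (h : ∀ m, ε ≤ Q.Hq F (c.1 m)) :
    ε ≤ Q.infHq F c :=
  le_ciInf h

lemma infHq_mono {F F' : PFin X} (h : ∀ G, Q.Hq F G ≤ Q.Hq F' G) (c : Q.Chain) :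
    Q.infHq F c ≤ Q.infHq F' c :=
  le_infHq Q fun m => (Q.infHq_le F c m).trans (h _)

lemma eventually_Hq_lt {F : PFin X} {c : Q.Chain} {ε : ℝ} (h : Q.infHq F c < ε) :
    ∀ᶠ m in atTop, Q.Hq F (c.1 m) < ε := by
  obtain ⟨m, hm⟩ := exists_lt_of_ciInf_lt h
  filter_upwards [eventually_ge_atTop m] with m' hm' using (c.Hq_le_of_le_right hm' F).trans_lt hm

lemma dchain_eq (c c' : Q.Chain) : Q.Dchain c c' = ⨆ n, Q.infHq (c.1 n) c' := by
  simp only [Dchain, infHq, iSup, iInf, Set.range, eq_comm]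

lemma dchain_le {c c' : Q.Chain} {ε : ℝ} (h : ∀ n, Q.infHq (c.1 n) c' ≤ ε) :
    Q.Dchain c c' ≤ ε := by
  rw [dchain_eq]
  exact ciSup_le h

variable {Q}

lemma Chain.monotone_infHq (c c' : Q.Chain) : Monotone fun n => Q.infHq (c.1 n) c' :=
  fun _ _ h => Q.infHq_mono (c.Hq_le_of_le_left h) c'

lemma Bounded.bddAbove_range_infHq (hB : Q.Bounded) (c c' : Q.Chain) :
    BddAbove (Set.range fun n => Q.infHq (c.1 n) c') := by
  obtain ⟨C, hC⟩ := hB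
  exact ⟨C + 2 * rF (c'.1 0), by
    rintro _ ⟨n, rfl⟩; exact (Q.infHq_le _ c' 0).trans (Q.Hq_le_of_d_le hC _ _)⟩

lemma Bounded.infHq_le_dchain (hB : Q.Bounded) (c c' : Q.Chain) (n : ℕ) :
    Q.infHq (c.1 n) c' ≤ Q.Dchain c c' := by
  rw [dchain_eq]
  exact le_ciSup (hB.bddAbove_range_infHq c c') n

lemma Bounded.dchain_triangle (hB : Q.Bounded) (c c' c'' : Q.Chain) :
    Q.Dchain c c'' ≤ Q.Dchain c c' + Q.Dchain c' c'' := by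
  refine Q.dchain_le fun n => le_of_forall_pos_le_add fun ε hε => ?_
  obtain ⟨m, hm⟩ := (Q.eventually_Hq_lt ((hB.infHq_le_dchain c c' n).trans_lt
    (lt_add_of_pos_right _ (half_pos hε)))).exists
  obtain ⟨m', hm'⟩ := (Q.eventually_Hq_lt ((hB.infHq_le_dchain c' c'' m).trans_lt
    (lt_add_of_pos_right _ (half_pos hε)))).exists
  linarith [Q.infHq_le (c.1 n) c'' m', Q.Hq_triangle (c.1 n) (c'.1 m) (c''.1 m')]

lemma Bounded.dchain_le_of_chainLE_left (hB : Q.Bounded) {c c₁ : Q.Chain} (h : Q.chainLE c c₁)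
    (c' : Q.Chain) : Q.Dchain c c' ≤ Q.Dchain c₁ c' := by
  refine Q.dchain_le fun n => ?_
  obtain ⟨m, hm⟩ := h n
  exact (Q.infHq_mono (Q.Hq_le_of_em_left hm) c').trans (hB.infHq_le_dchain c₁ c' m)

lemma Bounded.dchain_le_of_chainLE_right (hB : Q.Bounded) {c' c₁ : Q.Chain}
    (h : Q.chainLE c' c₁) (c : Q.Chain) : Q.Dchain c c₁ ≤ Q.Dchain c c' := by
  refine Q.dchain_le fun n => le_trans (Q.le_infHq fun m => ?_) (hB.infHq_le_dchain c c' n)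
  obtain ⟨p, hp⟩ := h m
  exact (Q.infHq_le _ c₁ p).trans (Q.Hq_le_of_em_right hp _)

lemma Bounded.D_mk_left (hB : Q.Bounded) (c : Q.Chain) (J : Q.CBX) :
    Q.D (Quotient.mk _ c) J = Q.Dchain c J.out :=
  have h : Q.chainEquiv _ c := Quotient.mk_out (s := Q.chainSetoid) c
  le_antisymm (hB.dchain_le_of_chainLE_left h.1 _) (hB.dchain_le_of_chainLE_left h.2 _)

lemma Bounded.D_mk_right (hB : Q.Bounded) (I : Q.CBX) (c : Q.Chain) :
    Q.D I (Quotient.mk _ c) = Q.Dchain I.out c :=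
  have h : Q.chainEquiv _ c := Quotient.mk_out (s := Q.chainSetoid) c
  le_antisymm (hB.dchain_le_of_chainLE_right h.2 _) (hB.dchain_le_of_chainLE_right h.1 _)

lemma Bounded.D_triangle (hB : Q.Bounded) (I J K : Q.CBX) : Q.D I K ≤ Q.D I J + Q.D J K :=
  hB.dchain_triangle _ _ _

lemma Bounded.bddAbove_range_D (hB : Q.Bounded) {ι : Type*} (u : ι → Q.CBX) (J : Q.CBX) :
    BddAbove (Set.range fun i => Q.D (u i) J) := by
  obtain ⟨C, hC⟩ := hB
  refine ⟨C + 2 * rF (J.out.1 0), ?_⟩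
  rintro _ ⟨i, rfl⟩
  exact Q.dchain_le fun n => (Q.infHq_le _ _ 0).trans (Q.Hq_le_of_d_le hC _ _)

end Chains

section Limit

variable {Q} {e : ℕ → Q.Chain} {nn : ℕ → ℕ}

lemma Bounded.exists_index_seq (hB : Q.Bounded)
    (he : ∀ j, Q.Dchain (e j) (e (j + 1)) < (1 / 2) ^ (j + 1)) :
    ∃ nn : ℕ → ℕ, (∀ j, Q.Hq ((e j).1 (nn j)) ((e (j + 1)).1 (nn (j + 1))) < (1 / 2) ^ (j + 1)) ∧
      ∀ p, ∀ i ≤ p, ∀ n ≤ p,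
        Q.Hq ((e i).1 n) ((e p).1 (nn p)) < Q.infHq ((e i).1 n) (e p) + (1 / 2) ^ p := by
  have hgood : ∀ p, ∀ᶠ m in atTop, ∀ i ∈ Set.Iic p, ∀ n ∈ Set.Iic p,
      Q.Hq ((e i).1 n) ((e p).1 m) < Q.infHq ((e i).1 n) (e p) + (1 / 2) ^ p := fun p =>
    (eventually_all_finite (Set.finite_Iic p)).2 fun i _ =>
      (eventually_all_finite (Set.finite_Iic p)).2 fun n _ =>
        Q.eventually_Hq_lt (lt_add_of_pos_right _ (by positivity))
  have hnext : ∀ j prev, ∃ m, Q.Hq ((e j).1 prev) ((e (j + 1)).1 m) < (1 / 2) ^ (j + 1) ∧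
      ∀ i ∈ Set.Iic (j + 1), ∀ n ∈ Set.Iic (j + 1),
        Q.Hq ((e i).1 n) ((e (j + 1)).1 m) < Q.infHq ((e i).1 n) (e (j + 1)) + (1 / 2) ^ (j + 1) :=
    fun j prev =>
      ((Q.eventually_Hq_lt ((hB.infHq_le_dchain _ _ prev).trans_lt (he j))).and (hgood _)).exists
  choose next hnext_close hnext_good using hnext
  obtain ⟨m₀, hm₀⟩ := (hgood 0).exists
  let nn : ℕ → ℕ := fun j => Nat.rec m₀ next j
  refine ⟨nn, fun j => hnext_close j (nn j), fun p => ?_⟩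
  cases p with
  | zero => exact hm₀
  | succ p => exact hnext_good p (nn p)

lemma half_pow_sub_half_pow_succ (j : ℕ) :
    (((1 / 2 : ℝ≥0) ^ j : ℝ≥0) : ℝ) - (((1 / 2 : ℝ≥0) ^ (j + 1) : ℝ≥0) : ℝ) =
      (1 / 2) ^ (j + 1) := by
  push_cast; ring

/-- Raising all radii of the `j`-th set by `2⁻ʲ` turns the `H_q`-closeness of consecutive sets
into the Egli–Milner relation. -/
noncomputable def limChain (e : ℕ → Q.Chain) (nn : ℕ → ℕ)
    (h : ∀ j, Q.Hq ((e j).1 (nn j)) ((e (j + 1)).1 (nn (j + 1))) < (1 / 2) ^ (j + 1)) : Q.Chain :=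
  ⟨fun j => ((e j).1 (nn j)).shift ((1 / 2) ^ j),
    fun j => Q.em_shift_of_Hq_lt ((h j).trans_eq (half_pow_sub_half_pow_succ j).symm)⟩

variable (h : ∀ j, Q.Hq ((e j).1 (nn j)) ((e (j + 1)).1 (nn (j + 1))) < (1 / 2) ^ (j + 1))

lemma Bounded.dchain_limChain_le (hB : Q.Bounded)
    (he : ∀ j m, j ≤ m → Q.Dchain (e j) (e m) < (1 / 2) ^ (j + 1))
    (hnn : ∀ p, ∀ i ≤ p, ∀ n ≤ p,
      Q.Hq ((e i).1 n) ((e p).1 (nn p)) < Q.infHq ((e i).1 n) (e p) + (1 / 2) ^ p) (j : ℕ) :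
    Q.Dchain (e j) (limChain e nn h) ≤ 4 * (1 / 2) ^ j := by
  refine Q.dchain_le fun n => ?_
  set p := max n j
  have hjp : j ≤ p := le_max_right n j
  have hpj : (1 / 2 : ℝ) ^ p ≤ (1 / 2) ^ j := pow_le_pow_of_le_one (by norm_num) (by norm_num) hjp
  calc Q.infHq ((e j).1 n) (limChain e nn h)
      ≤ Q.Hq ((e j).1 n) ((limChain e nn h).1 p) := Q.infHq_le _ _ p
    _ ≤ Q.Hq ((e j).1 n) ((e p).1 (nn p)) + 2 * (1 / 2) ^ p := by
      simpa [limChain] using Q.Hq_shift_right_le ((e j).1 n) ((e p).1 (nn p)) ((1 / 2) ^ p)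
    _ ≤ Q.Dchain (e j) (e p) + 3 * (1 / 2) ^ p := by
      linarith [hnn p j hjp n (le_max_left n j), hB.infHq_le_dchain (e j) (e p) n]
    _ ≤ 4 * (1 / 2) ^ j := by
      linarith [he j p hjp, pow_succ (1 / 2 : ℝ) j, pow_pos (by norm_num : (0 : ℝ) < 1 / 2) j]

lemma Bounded.dchain_limChain_left_le (hB : Q.Bounded) {y : Q.Chain} {B : ℝ}
    (hy : ∀ᶠ j in atTop, Q.Dchain (e j) y ≤ B) : Q.Dchain (limChain e nn h) y ≤ B := by
  refine Q.dchain_le fun j => ?_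
  obtain ⟨p, hp, hjp⟩ := (hy.and (eventually_ge_atTop j)).exists
  calc Q.infHq ((limChain e nn h).1 j) y
      ≤ Q.infHq ((limChain e nn h).1 p) y := (limChain e nn h).monotone_infHq y hjp
    _ ≤ Q.infHq ((e p).1 (nn p)) y := Q.infHq_mono (Q.Hq_shift_left_le _ · _) y
    _ ≤ Q.Dchain (e p) y := hB.infHq_le_dchain _ _ _
    _ ≤ B := hp

lemma Bounded.exists_chain_limit (hB : Q.Bounded) (e : ℕ → Q.Chain)
    (he : ∀ j m, j ≤ m → Q.Dchain (e j) (e m) < (1 / 2) ^ (j + 1)) :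
    ∃ G : Q.Chain, (∀ ε > 0, ∀ᶠ j in atTop, Q.Dchain (e j) G ≤ ε) ∧
      ∀ y B, (∀ᶠ j in atTop, Q.Dchain (e j) y ≤ B) → Q.Dchain G y ≤ B := by
  obtain ⟨nn, hclose, hnn⟩ := hB.exists_index_seq fun j => he j (j + 1) j.le_succ
  refine ⟨limChain e nn hclose, fun ε hε => ?_,
    fun y B => hB.dchain_limChain_left_le hclose⟩
  have hlim : Tendsto (fun j => 4 * (1 / 2 : ℝ) ^ j) atTop (nhds 0) := by
    simpa using (tendsto_pow_atTop_nhds_zero_of_lt_one (by norm_num : (0 : ℝ) ≤ 1 / 2)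
      (by norm_num)).const_mul 4
  filter_upwards [hlim.eventually (ge_mem_nhds hε)] with j hj
  exact (hB.dchain_limChain_le hclose he hnn j).trans hj

end Limit

end QuasiMetric

theorem stmt15_general {X : Type} (Q : QuasiMetric X) (hB : Q.Bounded) :
    SeqYonedaCompleteD Q.D := by
  intro u hu
  obtain ⟨k, hk, hkD⟩ := hu.exists_strictMono (ε := fun j => (1 / 2 : ℝ) ^ (j + 1))
    fun j => by positivity
  obtain ⟨G, hGconv, hGle⟩ := hB.exists_chain_limit (fun j => (u (k j)).out)
    fun j m hjm => hkD j (k m) (hk.monotone hjm)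
  refine ⟨Quotient.mk _ G, hu.isYonedaLim_of_subseq hB.D_triangle (hB.bddAbove_range_D u)
    hk.tendsto_atTop (fun ε hε => ?_) fun y B hy => ?_⟩
  · simpa only [hB.D_mk_right] using hGconv ε hε
  · rw [hB.D_mk_left]
    exact hGle _ _ hy

/-- `(CBX, D)` is sequentially Yoneda-complete. -/
theorem stmt15 {X : Type} (Q : QuasiMetric X) (hT1 : Q.IsT1) (hB : Q.Bounded)
    (hY : Q.SeqYonedaComplete) :
    SeqYonedaCompleteD Q.D :=
  stmt15_general Q hB
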